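/- Let (a_n) be a sequence of positive reals satisfying the shifted supermultiplicativity relation a_{n+m+10} ≥ a_n · a_m for all n, m ≥ 1, and suppose a_n^{1/n} is bounded above by some constant C. Then the limit lim_{n→∞} a_n^{1/n} exists. -/

import Mathlib

/-!
Taking logarithms turns the hypothesis into `s (m + n + 10) ≥ s m + s n` for `s = log ∘ a`, and
the bound into `s n ≤ n log C`. Iterating the shifted inequality along blocks of length `m + 10`
gives `s n ≥ n s m / (m + 10) - O(1)`, so `liminf s n / n ≥ sup_m s m / (m + 10) =: T`, while
`s n ≤ T (n + 10)` gives `limsup s n / n ≤ T`. Hence `s n / n → T` and `a n ^ (1 / n) → exp T`.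
-/

open Filter Topology

theorem Nat.exists_eq_mul_add_of_one_le {n d : ℕ} (hn : 1 ≤ n) (hd : 1 ≤ d) :
    ∃ k r, n = k * d + r ∧ 1 ≤ r ∧ r ≤ d := by
  refine ⟨(n - 1) / d, (n - 1) % d + 1, ?_, by omega, Nat.mod_lt _ hd⟩
  have := Nat.div_add_mod' (n - 1) d
  omega

def ShiftedSuperadditive (c : ℕ) (u : ℕ → ℝ) : Prop :=
  ∀ m n, 1 ≤ m → 1 ≤ n → u m + u n ≤ u (m + n + c)

namespace ShiftedSuperadditive

variable {c : ℕ} {u : ℕ → ℝ}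

theorem iterate (hu : ShiftedSuperadditive c u) {m : ℕ} (hm : 1 ≤ m) (k : ℕ) {r : ℕ}
    (hr : 1 ≤ r) : k * u m + u r ≤ u (k * (m + c) + r) := by
  induction k with
  | zero => simp
  | succ k ih =>
    have hstep := hu (k * (m + c) + r) m (by omega) hm
    rw [show k * (m + c) + r + m + c = (k + 1) * (m + c) + r by ring] at hstep
    push_cast
    linarith

theorem exists_le_of_one_le (hu : ShiftedSuperadditive c u) {m : ℕ} (hm : 1 ≤ m) :
    ∃ D, ∀ n, 1 ≤ n → n * (u m / (m + c)) - D ≤ u n := by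
  obtain ⟨B, hB⟩ := ((Set.finite_Icc 1 (m + c)).image u).bddBelow
  refine ⟨|u m| - B, fun n hn => ?_⟩
  obtain ⟨k, r, rfl, hr1, hrd⟩ := Nat.exists_eq_mul_add_of_one_le hn (show 1 ≤ m + c by omega)
  have hBr : B ≤ u r := hB ⟨r, ⟨hr1, hrd⟩, rfl⟩
  have hmc : (0 : ℝ) < m + c := by positivity
  have hrd' : (r : ℝ) ≤ m + c := by exact_mod_cast hrd
  have hr_rem : r * (u m / (m + c)) ≤ |u m| :=
    calc r * (u m / (m + c)) ≤ r * |u m / (m + c)| := by gcongr; exact le_abs_self _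
      _ ≤ (m + c) * |u m / (m + c)| := by gcongr
      _ = |u m| := by rw [abs_div, abs_of_pos hmc]; field_simp
  calc ((k * (m + c) + r : ℕ) : ℝ) * (u m / (m + c)) - (|u m| - B)
      = k * u m + r * (u m / (m + c)) - |u m| + B := by push_cast; field_simp; ring
    _ ≤ k * u m + u r := by linarith
    _ ≤ u (k * (m + c) + r) := hu.iterate hm k hr1

theorem tendsto_div (hu : ShiftedSuperadditive c u) {M : ℝ} (hM : ∀ n, 1 ≤ n → u n ≤ M * n) :
    Tendsto (fun n => u n / n) atTop (𝓝 (⨆ m : ℕ, u (m + 1) / (m + 1 + c))) := by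
  set f : ℕ → ℝ := fun m => u (m + 1) / (m + 1 + c)
  set T := ⨆ m, f m
  have hf_bdd : BddAbove (Set.range f) := by
    refine ⟨max M 0, ?_⟩
    rintro _ ⟨m, rfl⟩
    rw [div_le_iff₀ (by positivity)]
    calc u (m + 1) ≤ M * (m + 1) := by exact_mod_cast hM (m + 1) (by omega)
      _ ≤ max M 0 * (m + 1) := by gcongr; exact le_max_left _ _
      _ ≤ max M 0 * (m + 1 + c) := mul_le_mul_of_nonneg_left (by simp) (le_max_right _ _)
  rw [tendsto_order]
  constructor
  · intro a ha
    obtain ⟨m, hm⟩ := exists_lt_of_lt_ciSup ha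
    obtain ⟨D, hD⟩ := hu.exists_le_of_one_le (Nat.le_add_left 1 m)
    have hlim : Tendsto (fun n : ℕ => f m - D / n) atTop (𝓝 (f m)) := by
      simpa using tendsto_const_nhds.sub (tendsto_const_div_atTop_nhds_zero_nat D)
    filter_upwards [hlim.eventually (eventually_gt_nhds hm), eventually_ge_atTop 1]
      with n hlt hn
    have hn' : (0 : ℝ) < n := by exact_mod_cast hn
    refine hlt.trans_le ((le_div_iff₀ hn').2 ?_)
    have := hD n hn
    push_cast at this
    calc (f m - D / n) * n = n * f m - D := by field_simp
      _ ≤ u n := this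
  · intro b hb
    have hlim : Tendsto (fun n : ℕ => T + T * c / n) atTop (𝓝 T) := by
      simpa using tendsto_const_nhds.add (tendsto_const_div_atTop_nhds_zero_nat (T * c))
    filter_upwards [hlim.eventually (eventually_lt_nhds hb), eventually_ge_atTop 1]
      with n hlt hn
    obtain ⟨m, rfl⟩ := Nat.exists_eq_add_of_le' hn
    have hfm : f m ≤ T := le_ciSup hf_bdd m
    refine lt_of_le_of_lt ((div_le_iff₀ (by positivity)).2 ?_) hlt
    rw [div_le_iff₀ (by positivity)] at hfm
    push_cast
    calc u (m + 1) ≤ T * (m + 1 + c) := hfm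
      _ = (T + T * c / (m + 1)) * (m + 1) := by field_simp

end ShiftedSuperadditive

/-- Shifted Fekete lemma: if `a` is positive, satisfies the shifted
supermultiplicativity `a (n+m+10) ≥ a n * a m` for `n, m ≥ 1`, and
`a n ^ (1/n)` is bounded above, then `lim a n ^ (1/n)` exists. -/
theorem shifted_fekete_limit_exists
    (a : ℕ → ℝ) (hpos : ∀ n, 0 < a n)
    (hsuper : ∀ n m, 1 ≤ n → 1 ≤ m → a n * a m ≤ a (n + m + 10))
    (C : ℝ) (hbound : ∀ n, 1 ≤ n → a n ^ ((1 : ℝ) / n) ≤ C) :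
    ∃ L : ℝ, Filter.Tendsto (fun n => a n ^ ((1 : ℝ) / n)) Filter.atTop (nhds L) := by
  have hlog : ShiftedSuperadditive 10 (fun n => Real.log (a n)) := fun n m hn hm => by
    rw [← Real.log_mul (hpos n).ne' (hpos m).ne']
    exact Real.log_le_log (mul_pos (hpos n) (hpos m)) (hsuper n m hn hm)
  have hlog_le : ∀ n, 1 ≤ n → Real.log (a n) ≤ Real.log C * n := fun n hn => by
    have hn' : (0 : ℝ) < n := by exact_mod_cast hn
    have := Real.log_le_log (Real.rpow_pos_of_pos (hpos n) _) (hbound n hn)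
    rw [Real.log_rpow (hpos n), one_div_mul_eq_div, div_le_iff₀ hn'] at this
    exact this
  refine ⟨_, ((Real.continuous_exp.tendsto _).comp (hlog.tendsto_div hlog_le)).congr fun n => ?_⟩
  simp only [Function.comp_apply, Real.rpow_def_of_pos (hpos n), mul_one_div]
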